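/- arXiv:2409.05241 — 3 statements merged into one kernel-verified Lean document; each statement's English description precedes it below -/
import Mathlib

section
/- Let γ be a simplicial p-cycle with ℤ/2ℤ coefficients in an abstract simplicial complex, and let x ≠ y be two vertices of γ. Define the p-chain γ' = Glue_{x,y}(γ) by replacing every occurrence of x and of y in the p-simplices of γ with a single new vertex z (simplices that contained both x and y degenerate and are removed, and resulting duplicate p-simplices cancel mod 2). Then γ' is again a p-cycle, i.e., its boundary is zero. -/
attribute [local instance] Classical.propDecidable

/-- The mod-2 simplicial boundary operator on formal sums of finite vertex sets. -/
noncomputable def bdry (V : Type*) [DecidableEq V] :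
    (Finset V →₀ ZMod 2) →ₗ[ZMod 2] (Finset V →₀ ZMod 2) :=
  Finsupp.lsum (ZMod 2) fun σ =>
    LinearMap.toSpanSingleton (ZMod 2) _ (∑ v ∈ σ, Finsupp.single (σ.erase v) (1 : ZMod 2))

/-- Chains supported on the `p`-simplices (sets of `p+1` vertices) of `K`. -/
noncomputable def chainsIn {V : Type*} (K : Set (Finset V)) (p : ℕ) :
    Submodule (ZMod 2) (Finset V →₀ ZMod 2) :=
  Finsupp.supported (ZMod 2) (ZMod 2) {σ | σ ∈ K ∧ σ.card = p + 1}

noncomputable def cyclesIn {V : Type*} [DecidableEq V] (K : Set (Finset V)) (p : ℕ) :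
    Submodule (ZMod 2) (Finset V →₀ ZMod 2) :=
  chainsIn K p ⊓ LinearMap.ker (bdry V)

noncomputable def bdriesIn {V : Type*} [DecidableEq V] (K : Set (Finset V)) (p : ℕ) :
    Submodule (ZMod 2) (Finset V →₀ ZMod 2) :=
  Submodule.map (bdry V) (chainsIn K (p + 1))

/-- The `p`-th persistent Betti number of `K ⊆ L`: the rank of the image of
`H_p(K) → H_p(L)`, computed as `Z_p(K) / (Z_p(K) ∩ B_p(L))`. -/
noncomputable def pBetti {V : Type*} [DecidableEq V] (K L : Set (Finset V)) (p : ℕ) : Cardinal :=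
  Module.rank (ZMod 2) ↥(Submodule.map (bdriesIn L p).mkQ (cyclesIn K p))

noncomputable def betti {V : Type*} [DecidableEq V] (K : Set (Finset V)) (p : ℕ) : Cardinal :=
  pBetti K K p

/-- Pushforward of a `p`-chain along a vertex map; degenerate simplices are dropped and
coinciding images cancel mod 2. -/
noncomputable def pushChain {V W : Type*} [DecidableEq V] [DecidableEq W]
    (q : V → W) (p : ℕ) (c : Finset V →₀ ZMod 2) : Finset W →₀ ZMod 2 :=
  Finsupp.filter (fun τ => τ.card = p + 1)
    (Finsupp.mapDomain (fun σ : Finset V => σ.image q) c)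

/-- Gluing vertices `x` and `y` of a `p`-chain to a new vertex `z`. -/
noncomputable def glueChain {V : Type*} [DecidableEq V] (x y z : V) (p : ℕ)
    (c : Finset V →₀ ZMod 2) : Finset V →₀ ZMod 2 :=
  pushChain (fun v => if v = x ∨ v = y then z else v) p c

/-- The star of a vertex in a chain: the simplices of the chain containing it. -/
noncomputable def starChain {V : Type*} (x : V) (c : Finset V →₀ ZMod 2) :
    Finset V →₀ ZMod 2 :=
  Finsupp.filter (fun σ => x ∈ σ) c

/-- The cone over a chain with apex `z`. -/
noncomputable def coneChain {V : Type*} [DecidableEq V] (z : V) (c : Finset V →₀ ZMod 2) :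
    Finset V →₀ ZMod 2 :=
  Finsupp.mapDomain (insert z) c

section GlueAux

variable {V : Type*} [DecidableEq V]

/-- The gluing vertex map. -/
noncomputable def glueMap (x y z : V) : V → V := fun v => if v = x ∨ v = y then z else v

/-- Pushforward that kills degenerate simplices, as a linear map. -/
noncomputable def gmap (q : V → V) : (Finset V →₀ ZMod 2) →ₗ[ZMod 2] (Finset V →₀ ZMod 2) :=
  Finsupp.lsum (ZMod 2) fun σ => LinearMap.toSpanSingleton (ZMod 2) _
    (if (σ.image q).card = σ.card then Finsupp.single (σ.image q) (1 : ZMod 2) else 0)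

lemma gmap_single (q : V → V) (σ : Finset V) :
    gmap q (Finsupp.single σ (1 : ZMod 2)) =
      if (σ.image q).card = σ.card then Finsupp.single (σ.image q) (1 : ZMod 2) else 0 := by
  simp [gmap, Finsupp.lsum_single, LinearMap.toSpanSingleton_apply]

lemma bdry_single (σ : Finset V) :
    bdry V (Finsupp.single σ (1 : ZMod 2)) =
      ∑ v ∈ σ, Finsupp.single (σ.erase v) (1 : ZMod 2) := by
  simp [bdry, Finsupp.lsum_single, LinearMap.toSpanSingleton_apply]

lemma glueMap_injOn {x y z : V} (σ : Finset V) (hz : z ∉ σ) (h : ¬ (x ∈ σ ∧ y ∈ σ)) :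
    Set.InjOn (glueMap x y z) σ := by
  intro u hu u' hu' huv
  simp only [Finset.coe_mem, Finset.mem_coe] at hu hu'
  by_cases h1 : u = x ∨ u = y <;> by_cases h2 : u' = x ∨ u' = y
  · rcases h1 with rfl | rfl <;> rcases h2 with rfl | rfl <;> tauto
  · exfalso; apply hz
    have : glueMap x y z u = z := by simp [glueMap, h1]
    have h2' : glueMap x y z u' = u' := by simp [glueMap, h2]
    rw [this, h2'] at huv; rwa [← huv] at hu'
  · exfalso; apply hz
    have : glueMap x y z u' = z := by simp [glueMap, h2]
    have h1' : glueMap x y z u = u := by simp [glueMap, h1]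
    rw [this, h1'] at huv; rwa [huv] at hu
  · have h1' : glueMap x y z u = u := by simp [glueMap, h1]
    have h2' : glueMap x y z u' = u' := by simp [glueMap, h2]
    rw [h1', h2'] at huv; exact huv

lemma glueMap_eq_z {x y z : V} {u : V} (h : u = x ∨ u = y) : glueMap x y z u = z := by
  simp [glueMap, h]

lemma glueMap_eq_self {x y z : V} {u : V} (h : ¬ (u = x ∨ u = y)) : glueMap x y z u = u := by
  simp [glueMap, h]

/-- If both glued vertices are in σ, the image is that of σ with x erased. -/
lemma image_glueMap_degenerate {x y z : V} (hxy : x ≠ y) (σ : Finset V)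
    (hx : x ∈ σ) (hy : y ∈ σ) :
    σ.image (glueMap x y z) = (σ.erase x).image (glueMap x y z) := by
  ext a
  simp only [Finset.mem_image, Finset.mem_erase]
  constructor
  · rintro ⟨u, hu, rfl⟩
    by_cases h : u = x
    · exact ⟨y, ⟨hxy.symm, hy⟩, by rw [h]; rw [glueMap_eq_z (Or.inl rfl), glueMap_eq_z (Or.inr rfl)]⟩
    · exact ⟨u, ⟨h, hu⟩, rfl⟩
  · rintro ⟨u, ⟨_, hu⟩, rfl⟩
    exact ⟨u, hu, rfl⟩

lemma card_image_glueMap_lt {x y z : V} (hxy : x ≠ y) (σ : Finset V)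
    (hx : x ∈ σ) (hy : y ∈ σ) :
    (σ.image (glueMap x y z)).card < σ.card := by
  rw [image_glueMap_degenerate hxy σ hx hy]
  calc ((σ.erase x).image (glueMap x y z)).card ≤ (σ.erase x).card := Finset.card_image_le
    _ < σ.card := Finset.card_erase_lt_of_mem hx

/-- erase commutes with image under injectivity on σ. -/
lemma image_erase_of_injOn {q : V → V} {σ : Finset V} (hq : Set.InjOn q σ) {v : V} (hv : v ∈ σ) :
    (σ.erase v).image q = (σ.image q).erase (q v) := by
  ext a
  simp only [Finset.mem_image, Finset.mem_erase]
  constructor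
  · rintro ⟨u, ⟨huv, hu⟩, rfl⟩
    exact ⟨fun h => huv (hq hu hv h), u, hu, rfl⟩
  · rintro ⟨ha, u, hu, rfl⟩
    exact ⟨u, ⟨fun h => ha (by rw [h]), hu⟩, rfl⟩

/-- The two nondegenerate faces of a degenerate simplex have the same image. -/
lemma image_erase_x_eq_erase_y {x y z : V} (hxy : x ≠ y) (σ : Finset V) (hz : z ∉ σ)
    (hx : x ∈ σ) (hy : y ∈ σ) :
    (σ.erase x).image (glueMap x y z) = (σ.erase y).image (glueMap x y z) := by
  ext a
  simp only [Finset.mem_image, Finset.mem_erase]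
  constructor
  · rintro ⟨u, ⟨hux, hu⟩, rfl⟩
    by_cases h : u = x ∨ u = y
    · refine ⟨x, ⟨hxy, hx⟩, ?_⟩
      rw [glueMap_eq_z h, glueMap_eq_z (Or.inl rfl)]
    · exact ⟨u, ⟨fun hh => h (Or.inr hh), hu⟩, rfl⟩
  · rintro ⟨u, ⟨huy, hu⟩, rfl⟩
    by_cases h : u = x ∨ u = y
    · refine ⟨y, ⟨hxy.symm, hy⟩, ?_⟩
      rw [glueMap_eq_z h, glueMap_eq_z (Or.inr rfl)]
    · exact ⟨u, ⟨fun hh => h (Or.inl hh), hu⟩, rfl⟩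

/-- Key chain-map identity on a single simplex not containing z. -/
lemma bdry_gmap_single {x y z : V} (hxy : x ≠ y) (σ : Finset V) (hz : z ∉ σ) :
    bdry V (gmap (glueMap x y z) (Finsupp.single σ (1 : ZMod 2))) =
      gmap (glueMap x y z) (bdry V (Finsupp.single σ (1 : ZMod 2))) := by
  set q := glueMap x y z with hqdef
  rw [gmap_single, bdry_single, map_sum]
  by_cases hb : x ∈ σ ∧ y ∈ σ
  · obtain ⟨hx, hy⟩ := hb
    rw [if_neg (Nat.ne_of_lt (card_image_glueMap_lt hxy σ hx hy)), map_zero]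
    -- split RHS sum according to v ∈ {x,y}
    rw [← Finset.sum_filter_add_sum_filter_not σ (fun v => v = x ∨ v = y)]
    have hfilt : σ.filter (fun v => v = x ∨ v = y) = {x, y} := by
      ext v
      simp only [Finset.mem_filter, Finset.mem_insert, Finset.mem_singleton]
      constructor
      · rintro ⟨_, h⟩; exact h
      · rintro (rfl | rfl) <;> simp [hx, hy]
    have hsecond : ∑ v ∈ σ.filter (fun v => ¬ (v = x ∨ v = y)),
        gmap q (Finsupp.single (σ.erase v) (1 : ZMod 2)) = 0 := by
      apply Finset.sum_eq_zero
      intro v hv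
      rw [Finset.mem_filter] at hv
      obtain ⟨hvσ, hv2⟩ := hv
      push_neg at hv2
      have hx' : x ∈ σ.erase v := Finset.mem_erase.2 ⟨fun h => hv2.1 h.symm, hx⟩
      have hy' : y ∈ σ.erase v := Finset.mem_erase.2 ⟨fun h => hv2.2 h.symm, hy⟩
      rw [gmap_single, if_neg (Nat.ne_of_lt (card_image_glueMap_lt hxy _ hx' hy'))]
    rw [hfilt, hsecond, add_zero, Finset.sum_pair hxy]
    have hinjx : Set.InjOn q (σ.erase x) :=
      glueMap_injOn _ (fun h => hz (Finset.mem_of_mem_erase h))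
        (fun h => (Finset.mem_erase.1 h.1).1 rfl)
    have hinjy : Set.InjOn q (σ.erase y) :=
      glueMap_injOn _ (fun h => hz (Finset.mem_of_mem_erase h))
        (fun h => (Finset.mem_erase.1 h.2).1 rfl)
    rw [gmap_single, gmap_single,
      if_pos (Finset.card_image_of_injOn hinjx), if_pos (Finset.card_image_of_injOn hinjy),
      image_erase_x_eq_erase_y hxy σ hz hx hy]
    have h11 : (1 : ZMod 2) + 1 = 0 := by decide
    rw [← Finsupp.single_add, h11, Finsupp.single_zero]
  · have hinj : Set.InjOn q σ := glueMap_injOn σ hz hb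
    rw [if_pos (Finset.card_image_of_injOn hinj), bdry_single,
      Finset.sum_image (fun u hu u' hu' h => hinj hu hu' h)]
    apply Finset.sum_congr rfl
    intro v hv
    have hinjv : Set.InjOn q (σ.erase v) := hinj.mono (by
      intro u hu; exact Finset.mem_of_mem_erase hu)
    rw [gmap_single, if_pos (Finset.card_image_of_injOn hinjv),
      image_erase_of_injOn hinj hv]

end GlueAux

/-- gluing two vertices of a `p`-cycle yields a `p`-cycle. -/
theorem glueChain_isCycle {V : Type*} [DecidableEq V] (p : ℕ) (c : Finset V →₀ ZMod 2)
    (x y z : V)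
    (hchain : ∀ σ ∈ c.support, σ.card = p + 1) (hcycle : bdry V c = 0)
    (hx : ∃ σ ∈ c.support, x ∈ σ) (hy : ∃ σ ∈ c.support, y ∈ σ) (hxy : x ≠ y)
    (hz : ∀ σ ∈ c.support, z ∉ σ) :
    (∀ σ ∈ (glueChain x y z p c).support, σ.card = p + 1) ∧
      bdry V (glueChain x y z p c) = 0 := by
  constructor
  · intro σ hσ
    unfold glueChain pushChain at hσ
    rw [Finsupp.support_filter, Finset.mem_filter] at hσ
    exact hσ.2
  · have hqeq : (fun v => if v = x ∨ v = y then z else v) = glueMap x y z := rfl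
    set q := glueMap x y z with hqdef
    have hrep : c = ∑ σ ∈ c.support, Finsupp.single σ (c σ) := (Finsupp.sum_single c).symm
    have hglue : glueChain x y z p c = gmap q c := by
      unfold glueChain pushChain
      rw [hqeq]
      conv_lhs => rw [hrep]
      conv_rhs => rw [hrep]
      rw [map_sum, Finsupp.mapDomain_finset_sum, Finsupp.filter_sum]
      apply Finset.sum_congr rfl
      intro σ hσ
      have h1 : Finsupp.single σ (c σ) = (c σ) • Finsupp.single σ (1 : ZMod 2) := by
        rw [Finsupp.smul_single, smul_eq_mul, mul_one]
      rw [h1, Finsupp.mapDomain_smul, Finsupp.filter_smul, map_smul, gmap_single,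
        Finsupp.mapDomain_single]
      congr 1
      have hcard := hchain σ hσ
      by_cases h : (σ.image q).card = p + 1
      · rw [Finsupp.filter_single_of_pos (fun τ : Finset V => τ.card = p + 1) h, if_pos (by rw [h, hcard])]
      · rw [Finsupp.filter_single_of_neg (fun τ : Finset V => τ.card = p + 1) h, if_neg (by rw [hcard]; exact h)]
    rw [hglue]
    have hcomm : bdry V (gmap q c) = gmap q (bdry V c) := by
      conv_lhs => rw [hrep]
      conv_rhs => rw [hrep]
      rw [map_sum, map_sum, map_sum, map_sum]
      apply Finset.sum_congr rfl
      intro σ hσ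
      have h1 : Finsupp.single σ (c σ) = (c σ) • Finsupp.single σ (1 : ZMod 2) := by
        rw [Finsupp.smul_single, smul_eq_mul, mul_one]
      rw [h1, map_smul, map_smul, map_smul, map_smul,
        bdry_gmap_single hxy σ (hz σ hσ)]
    rw [hcomm, hcycle, map_zero]
end

section
/- For a p-cycle γ with vertices x ≠ y and γ' = Glue_{x,y}(γ), the symmetric difference γ + γ' equals Star_γ(x) ∪ Star_γ(y) ∪ Star_{γ'}(z), where z is the new vertex. -/
attribute [local instance] Classical.propDecidable

/-- `γ + Glue_{x,y}(γ) = Star_γ(x) ∪ Star_γ(y) ∪ Star_{γ'}(z)`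
(as sets of `p`-simplices, chains mod 2 being identified with their supports). -/
theorem add_glueChain_support_eq {V : Type*} [DecidableEq V] (p : ℕ) (c : Finset V →₀ ZMod 2)
    (x y z : V)
    (hchain : ∀ σ ∈ c.support, σ.card = p + 1) (hcycle : bdry V c = 0)
    (hx : ∃ σ ∈ c.support, x ∈ σ) (hy : ∃ σ ∈ c.support, y ∈ σ) (hxy : x ≠ y)
    (hz : ∀ σ ∈ c.support, z ∉ σ) :
    (c + glueChain x y z p c).support =
      (starChain x c).support ∪ (starChain y c).support ∪
        (starChain z (glueChain x y z p c)).support := by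
  classical
  set q : V → V := fun v => if v = x ∨ v = y then z else v with hqdef
  -- coefficient of c at simplices containing z is zero
  have hczero : ∀ τ : Finset V, z ∈ τ → c τ = 0 := by
    intro τ hzτ
    by_contra h
    exact hz τ (Finsupp.mem_support_iff.2 h) hzτ
  -- image facts
  have himg_fix : ∀ σ : Finset V, x ∉ σ → y ∉ σ → σ.image q = σ := by
    intro σ hxσ hyσ
    have : ∀ v ∈ σ, q v = v := by
      intro v hv
      have hvx : v ≠ x := fun h => hxσ (h ▸ hv)
      have hvy : v ≠ y := fun h => hyσ (h ▸ hv)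
      simp [hqdef, hvx, hvy]
    calc σ.image q = σ.image id := Finset.image_congr (fun v hv => this v hv)
      _ = σ := Finset.image_id
  have himg_z : ∀ σ : Finset V, (x ∈ σ ∨ y ∈ σ) → z ∈ σ.image q := by
    intro σ hσ
    rcases hσ with h | h
    · exact Finset.mem_image.2 ⟨x, h, by simp [hqdef]⟩
    · exact Finset.mem_image.2 ⟨y, h, by simp [hqdef]⟩
  -- coefficient of the glued chain away from z
  have hγ' : ∀ τ : Finset V, z ∉ τ →
      (glueChain x y z p c) τ = (if x ∈ τ ∨ y ∈ τ then 0 else c τ) := by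
    intro τ hzτ
    have hmap : (Finsupp.mapDomain (fun σ : Finset V => σ.image q) c) τ =
        ∑ σ ∈ c.support, if σ.image q = τ then c σ else 0 := by
      rw [Finsupp.mapDomain, Finsupp.sum_apply]
      simp [Finsupp.sum, Finsupp.single_apply]
    have hterm : ∀ σ ∈ c.support,
        (if σ.image q = τ then c σ else 0) =
          (if σ = τ then (if x ∈ σ ∨ y ∈ σ then 0 else c σ) else 0) := by
      intro σ hσ
      by_cases hxyσ : x ∈ σ ∨ y ∈ σ
      · have hne : σ.image q ≠ τ := fun h => hzτ (h ▸ himg_z σ hxyσ)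
        simp [hne, hxyσ]
      · push_neg at hxyσ
        rw [himg_fix σ hxyσ.1 hxyσ.2]
        by_cases hστ : σ = τ
        · subst hστ; simp [hxyσ.1, hxyσ.2]
        · simp [hστ]
    have hsum : (Finsupp.mapDomain (fun σ : Finset V => σ.image q) c) τ =
        (if x ∈ τ ∨ y ∈ τ then 0 else c τ) := by
      rw [hmap, Finset.sum_congr rfl hterm, Finset.sum_ite_eq' c.support τ]
      by_cases hτ : τ ∈ c.support
      · simp [hτ]
      · have : c τ = 0 := Finsupp.notMem_support_iff.1 hτ
        simp [hτ, this]
    show (Finsupp.filter (fun τ => τ.card = p + 1)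
        (Finsupp.mapDomain (fun σ : Finset V => σ.image q) c)) τ = _
    rw [Finsupp.filter_apply, hsum]
    by_cases hcard : τ.card = p + 1
    · simp [hcard]
    · have hcτ : c τ = 0 := by
        by_contra h
        exact hcard (hchain τ (Finsupp.mem_support_iff.2 h))
      simp [hcard, hcτ]
  ext τ
  simp only [Finset.mem_union, Finsupp.mem_support_iff, Finsupp.add_apply, starChain,
    Finsupp.support_filter, Finset.mem_filter]
  by_cases hzτ : z ∈ τ
  · rw [hczero τ hzτ, zero_add]
    simp [hczero τ hzτ, hzτ]
  · rw [hγ' τ hzτ]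
    by_cases hxyτ : x ∈ τ ∨ y ∈ τ
    · simp only [if_pos hxyτ, add_zero]
      constructor
      · intro h
        rcases hxyτ with h' | h'
        · exact Or.inl (Or.inl ⟨h, h'⟩)
        · exact Or.inl (Or.inr ⟨h, h'⟩)
      · rintro ((⟨h, _⟩ | ⟨h, _⟩) | ⟨_, h⟩)
        · exact h
        · exact h
        · exact absurd h hzτ
    · push_neg at hxyτ
      rw [if_neg (by tauto)]
      have : c τ + c τ = 0 := by
        have : (2 : ZMod 2) = 0 := rfl
        calc c τ + c τ = 2 * c τ := by ring
          _ = 0 := by rw [this, zero_mul]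
      simp [this, hxyτ.1, hxyτ.2, hzτ]
end

section
/- For every ε > 0, every dimension d, and every p, there is a constant c = c(ε, d) such that for every finite set A ⊆ ℝ^d of n points, the persistent Betti number β_p(Čech_1(A), Čech_{1+ε}(A)) is at most c·n. One may take c = binom(C, p) with C = (3 + 4√d/ε)^d. -/
/-- The radius of the smallest closed ball enclosing `B`. -/
noncomputable def encRad {d : ℕ} (B : Finset (EuclideanSpace ℝ (Fin d))) : ℝ :=
  sInf {r | ∃ x, ∀ b ∈ B, dist b x ≤ r}

/-- The Čech complex of `A ⊆ ℝ^d` at scale `r`: nonempty subsets of `A` such that the closed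
balls of radius `r` around the points have a common point. -/
def cech (d : ℕ) (r : ℝ) (A : Finset (EuclideanSpace ℝ (Fin d))) :
    Set (Finset (EuclideanSpace ℝ (Fin d))) :=
  {B | B.Nonempty ∧ ↑B ⊆ (↑A : Set (EuclideanSpace ℝ (Fin d))) ∧ ∃ x, ∀ b ∈ B, dist b x ≤ r}

/-- `Ψ` is a partition of `ℝ^d` into cells of diameter at most `ε`. -/
def IsPartitionMesh (d : ℕ) (ε : ℝ) (Ψ : Set (Set (EuclideanSpace ℝ (Fin d)))) : Prop :=
  (∀ x, ∃! ψ, ψ ∈ Ψ ∧ x ∈ ψ) ∧ ∀ ψ ∈ Ψ, EMetric.diam ψ ≤ ENNReal.ofReal ε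

attribute [local instance] Classical.propDecidable

section AlgebraAux

variable {V : Type*} [DecidableEq V]

lemma chain_add_self (a : Finset V →₀ ZMod 2) : a + a = 0 := by
  rw [← two_smul (ZMod 2) a]
  have h2 : (2 : ZMod 2) = 0 := rfl
  rw [h2, zero_smul]

lemma chain_neg (a : Finset V →₀ ZMod 2) : -a = a :=
  neg_eq_of_add_eq_zero_left (chain_add_self a)

lemma chain_sub (a b : Finset V →₀ ZMod 2) : a - b = a + b := by
  rw [sub_eq_add_neg, chain_neg]

lemma supported_induction {S : Set (Finset V)} {M : (Finset V →₀ ZMod 2) → Prop}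
    (h0 : M 0) (hadd : ∀ a b, M a → M b → M (a + b))
    (hs : ∀ σ ∈ S, M (Finsupp.single σ (1 : ZMod 2))) :
    ∀ c : Finset V →₀ ZMod 2, (↑c.support ⊆ S) → M c := by
  intro c
  induction c using Finsupp.induction with
  | zero => intro _; exact h0
  | single_add σ b f hσ hb ih =>
    intro hc
    have hb1 : b = 1 := by
      have hall : ∀ x : ZMod 2, x ≠ 0 → x = 1 := by decide
      exact hall b hb
    subst hb1
    have hsup : ((Finsupp.single σ (1 : ZMod 2)) + f).support
        = insert σ f.support := by
      rw [Finsupp.support_add_eq, Finsupp.support_single_ne_zero σ one_ne_zero]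
      · ext τ; simp
      · rw [Finsupp.support_single_ne_zero σ one_ne_zero]
        simpa using hσ
    rw [hsup] at hc
    refine hadd _ _ (hs σ (hc (by simp))) (ih ?_)
    exact fun τ hτ => hc (by simp [hτ])

lemma bdry_bdry (c : Finset V →₀ ZMod 2) : bdry V (bdry V c) = 0 := by
  refine supported_induction (S := Set.univ)
    (M := fun c => bdry V (bdry V c) = 0)
    (by show bdry V (bdry V 0) = 0; rw [map_zero, map_zero])
    (fun a b ha hb => ?_) (fun σ _ => ?_) c (by simp)
  · show bdry V (bdry V (a + b)) = 0
    rw [map_add, map_add, ha, hb, add_zero]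
  · show bdry V (bdry V (Finsupp.single σ (1 : ZMod 2))) = 0
    rw [bdry_single, map_sum]
    have h1 : ∀ v ∈ σ, bdry V (Finsupp.single (σ.erase v) (1 : ZMod 2))
        = ∑ w ∈ σ.erase v, Finsupp.single ((σ.erase v).erase w) (1 : ZMod 2) :=
      fun v _ => bdry_single _
    rw [Finset.sum_congr rfl h1,
      Finset.sum_sigma' σ (fun v => σ.erase v)
        (fun v w => Finsupp.single ((σ.erase v).erase w) (1 : ZMod 2))]
    refine Finset.sum_involution (fun a _ => ⟨a.2, a.1⟩) ?_ ?_ ?_ ?_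
    · intro a ha
      have : (σ.erase a.2).erase a.1 = (σ.erase a.1).erase a.2 := Finset.erase_right_comm
      rw [this, ← Finsupp.single_add]
      norm_num
      rfl
    · intro a ha _
      obtain ⟨h1', h2'⟩ := Finset.mem_sigma.mp ha
      intro h
      have : a.2 = a.1 := congrArg Sigma.fst h
      exact (Finset.mem_erase.mp h2').1 this
    · intro a ha
      obtain ⟨h1', h2'⟩ := Finset.mem_sigma.mp ha
      refine Finset.mem_sigma.mpr ⟨Finset.mem_of_mem_erase h2', Finset.mem_erase.mpr
        ⟨fun h => (Finset.mem_erase.mp h2').1 h.symm, h1'⟩⟩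
    · intro a ha; rfl

lemma pushChain_add {W : Type*} [DecidableEq W] (q : V → W) (p : ℕ)
    (a b : Finset V →₀ ZMod 2) :
    pushChain q p (a + b) = pushChain q p a + pushChain q p b := by
  simp [pushChain, Finsupp.mapDomain_add, Finsupp.filter_add]

lemma pushChain_zero {W : Type*} [DecidableEq W] (q : V → W) (p : ℕ) :
    pushChain q p (0 : Finset V →₀ ZMod 2) = 0 := by
  simp [pushChain, Finsupp.mapDomain_zero, Finsupp.filter_zero]

lemma pushChain_single {W : Type*} [DecidableEq W] (q : V → W) (p : ℕ) (σ : Finset V) :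
    pushChain q p (Finsupp.single σ (1 : ZMod 2))
      = if (σ.image q).card = p + 1 then Finsupp.single (σ.image q) (1 : ZMod 2) else 0 := by
  unfold pushChain
  rw [Finsupp.mapDomain_single]
  split
  · exact Finsupp.filter_single_of_pos _ ‹_›
  · exact Finsupp.filter_single_of_neg _ ‹_›

lemma coneChain_add (w : V) (a b : Finset V →₀ ZMod 2) :
    coneChain w (a + b) = coneChain w a + coneChain w b := Finsupp.mapDomain_add

lemma coneChain_single (w : V) (σ : Finset V) :
    coneChain w (Finsupp.single σ (1 : ZMod 2))
      = Finsupp.single (insert w σ) (1 : ZMod 2) := Finsupp.mapDomain_single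

end AlgebraAux
section AlgebraAux2

variable {V : Type*} [DecidableEq V]

lemma filter_finset_sum {ι : Type*} (P : Finset V → Prop) [DecidablePred P] (s : Finset ι)
    (g : ι → Finset V →₀ ZMod 2) :
    Finsupp.filter P (∑ i ∈ s, g i) = ∑ i ∈ s, Finsupp.filter P (g i) :=
  map_sum (Finsupp.filterAddHom P) g s

lemma image_update {x w : V} {σ : Finset V} (hx : x ∈ σ) :
    σ.image (fun v => if v = x then w else v) = insert w (σ.erase x) := by
  ext a
  simp only [Finset.mem_image, Finset.mem_insert, Finset.mem_erase]
  constructor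
  · rintro ⟨v, hv, rfl⟩
    by_cases h : v = x
    · left; rw [if_pos h]
    · right; rw [if_neg h]; exact ⟨h, hv⟩
  · rintro (rfl | ⟨ha, haσ⟩)
    · exact ⟨x, hx, by rw [if_pos rfl]⟩
    · exact ⟨a, haσ, by rw [if_neg ha]⟩

lemma filter_bdry_eq_zero (x : V) (P : Finset V → Prop) [DecidablePred P] (hP : ∀ τ, P τ → x ∈ τ)
    (c : Finset V →₀ ZMod 2) (hc : ∀ σ ∈ c.support, x ∉ σ) :
    Finsupp.filter P (bdry V c) = 0 := by
  refine supported_induction (S := {σ : Finset V | x ∉ σ})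
    (M := fun c => Finsupp.filter P (bdry V c) = 0) ?_ ?_ ?_ c hc
  · show Finsupp.filter P (bdry V 0) = 0
    rw [map_zero, Finsupp.filter_zero]
  · intro a b ha hb
    show Finsupp.filter P (bdry V (a + b)) = 0
    rw [map_add, Finsupp.filter_add, ha, hb, add_zero]
  · intro σ hσ
    show Finsupp.filter P (bdry V (Finsupp.single σ (1 : ZMod 2))) = 0
    rw [bdry_single, filter_finset_sum]
    refine Finset.sum_eq_zero fun v _ => ?_
    refine Finsupp.filter_single_of_neg _ fun hPτ => ?_
    exact hσ (Finset.erase_subset _ _ (hP _ hPτ))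

lemma filter_bdry_of_both (x w : V) (hxw : x ≠ w) (c : Finset V →₀ ZMod 2)
    (hc : ∀ σ ∈ c.support, x ∈ σ ∧ w ∈ σ) :
    Finsupp.filter (fun τ => x ∈ τ ∧ w ∉ τ) (bdry V c)
      = Finsupp.mapDomain (fun σ => σ.erase w) c := by
  refine supported_induction (S := {σ : Finset V | x ∈ σ ∧ w ∈ σ})
    (M := fun c => Finsupp.filter (fun τ => x ∈ τ ∧ w ∉ τ) (bdry V c)
      = Finsupp.mapDomain (fun σ => σ.erase w) c) ?_ ?_ ?_ c hc
  · show Finsupp.filter _ (bdry V 0) = Finsupp.mapDomain _ (0 : Finset V →₀ ZMod 2)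
    rw [map_zero, Finsupp.filter_zero, Finsupp.mapDomain_zero]
  · intro a b ha hb
    show Finsupp.filter _ (bdry V (a + b)) = Finsupp.mapDomain _ (a + b)
    rw [map_add, Finsupp.filter_add, ha, hb, Finsupp.mapDomain_add]
  · rintro σ ⟨hxσ, hwσ⟩
    show Finsupp.filter _ (bdry V (Finsupp.single σ (1 : ZMod 2))) = _
    rw [bdry_single, filter_finset_sum, Finsupp.mapDomain_single]
    rw [Finset.sum_eq_single w ?_ ?_]
    · exact Finsupp.filter_single_of_pos _
        ⟨Finset.mem_erase.mpr ⟨hxw, hxσ⟩, Finset.notMem_erase w σ⟩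
    · intro b hb hbw
      refine Finsupp.filter_single_of_neg _ fun hh => ?_
      exact hh.2 (Finset.mem_erase.mpr ⟨fun h => hbw h.symm, hwσ⟩)
    · intro h; exact absurd hwσ h

lemma cone_mapErase (w : V) (c : Finset V →₀ ZMod 2) (hc : ∀ σ ∈ c.support, w ∈ σ) :
    coneChain w (Finsupp.mapDomain (fun σ => σ.erase w) c) = c := by
  unfold coneChain
  rw [← Finsupp.mapDomain_comp]
  exact (Finsupp.mapDomain_congr (g := id)
    (fun σ hσ => Finset.insert_erase (hc σ hσ))).trans Finsupp.mapDomain_id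

lemma bdry_cone (x w : V) (p : ℕ) (c : Finset V →₀ ZMod 2)
    (hc : ∀ σ ∈ c.support, x ∈ σ ∧ w ∉ σ ∧ σ.card = p + 1) :
    bdry V (coneChain w c) =
      c + pushChain (fun v => if v = x then w else v) p c
        + coneChain w (Finsupp.filter (fun τ => x ∈ τ ∧ w ∉ τ) (bdry V c)) := by
  refine supported_induction (S := {σ : Finset V | x ∈ σ ∧ w ∉ σ ∧ σ.card = p + 1})
    (M := fun c => bdry V (coneChain w c) =
      c + pushChain (fun v => if v = x then w else v) p c
        + coneChain w (Finsupp.filter (fun τ => x ∈ τ ∧ w ∉ τ) (bdry V c))) ?_ ?_ ?_ c hc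
  · show bdry V (coneChain w 0) = 0 + pushChain _ _ (0 : Finset V →₀ ZMod 2)
      + coneChain w (Finsupp.filter _ (bdry V 0))
    simp [coneChain, Finsupp.filter_zero, Finsupp.mapDomain_zero, pushChain_zero]
  · intro a b ha hb
    show bdry V (coneChain w (a + b)) = (a + b) + pushChain _ _ (a + b)
      + coneChain w (Finsupp.filter _ (bdry V (a + b)))
    rw [coneChain_add, map_add, ha, hb, pushChain_add, map_add, Finsupp.filter_add,
      coneChain_add]
    abel
  · rintro σ ⟨hx, hw, hcard⟩
    show bdry V (coneChain w (Finsupp.single σ (1 : ZMod 2)))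
      = Finsupp.single σ (1 : ZMod 2)
        + pushChain (fun v => if v = x then w else v) p (Finsupp.single σ (1 : ZMod 2))
        + coneChain w (Finsupp.filter (fun τ => x ∈ τ ∧ w ∉ τ)
            (bdry V (Finsupp.single σ (1 : ZMod 2))))
    have hvne : ∀ v ∈ σ, w ≠ v := fun v hv h => hw (h ▸ hv)
    have hLHS : bdry V (coneChain w (Finsupp.single σ (1 : ZMod 2)))
        = Finsupp.single σ (1 : ZMod 2)
          + (Finsupp.single (insert w (σ.erase x)) (1 : ZMod 2)
             + ∑ v ∈ σ.erase x, Finsupp.single (insert w (σ.erase v)) (1 : ZMod 2)) := by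
      rw [coneChain_single, bdry_single, Finset.sum_insert hw, Finset.erase_insert hw,
        Finset.sum_congr rfl (fun v hv => by rw [Finset.erase_insert_of_ne (hvne v hv)]),
        ← Finset.add_sum_erase _ _ hx]
    have hcc : (insert w (σ.erase x)).card = p + 1 := by
      rw [Finset.card_insert_of_notMem (fun h => hw (Finset.erase_subset _ _ h)),
        Finset.card_erase_of_mem hx, hcard]
      omega
    have hpush : pushChain (fun v => if v = x then w else v) p (Finsupp.single σ (1 : ZMod 2))
        = Finsupp.single (insert w (σ.erase x)) (1 : ZMod 2) := by
      rw [pushChain_single, image_update hx, if_pos hcc]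
    have hthird : Finsupp.filter (fun τ => x ∈ τ ∧ w ∉ τ)
          (bdry V (Finsupp.single σ (1 : ZMod 2)))
        = ∑ v ∈ σ.erase x, Finsupp.single (σ.erase v) (1 : ZMod 2) := by
      rw [bdry_single, filter_finset_sum, ← Finset.add_sum_erase _ _ hx,
        Finsupp.filter_single_of_neg _ (fun hh => Finset.notMem_erase x σ hh.1), zero_add]
      refine Finset.sum_congr rfl fun v hv => ?_
      refine Finsupp.filter_single_of_pos _ ⟨?_, ?_⟩
      · exact Finset.mem_erase.mpr ⟨Ne.symm (Finset.mem_erase.mp hv).1, hx⟩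
      · exact fun hwe => hw (Finset.erase_subset _ _ hwe)
    have hcone : coneChain w (∑ v ∈ σ.erase x, Finsupp.single (σ.erase v) (1 : ZMod 2))
        = ∑ v ∈ σ.erase x, Finsupp.single (insert w (σ.erase v)) (1 : ZMod 2) := by
      unfold coneChain
      rw [Finsupp.mapDomain_finset_sum]
      exact Finset.sum_congr rfl fun v _ => Finsupp.mapDomain_single
    rw [hLHS, hpush, hthird, hcone]
    abel

lemma pushChain_id_of (x w : V) (p : ℕ) (c : Finset V →₀ ZMod 2)
    (hc : ∀ σ ∈ c.support, x ∉ σ ∧ σ.card = p + 1) :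
    pushChain (fun v => if v = x then w else v) p c = c := by
  refine supported_induction (S := {σ : Finset V | x ∉ σ ∧ σ.card = p + 1})
    (M := fun c => pushChain (fun v => if v = x then w else v) p c = c) ?_ ?_ ?_ c hc
  · exact pushChain_zero _ _
  · intro a b ha hb
    show pushChain _ _ (a + b) = a + b
    rw [pushChain_add, ha, hb]
  · rintro σ ⟨hx, hcard⟩
    show pushChain _ _ (Finsupp.single σ (1 : ZMod 2)) = Finsupp.single σ (1 : ZMod 2)
    have himg : σ.image (fun v => if v = x then w else v) = σ := by
      have heq : Set.EqOn (fun v => if v = x then w else v) id ↑σ := by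
        intro v hv
        have hvx : v ≠ x := fun h => hx (by simpa [h] using hv)
        simp [hvx]
      rw [Finset.image_congr heq, Finset.image_id]
    rw [pushChain_single, himg, if_pos hcard]

lemma pushChain_degen (x w : V) (hxw : x ≠ w) (p : ℕ) (c : Finset V →₀ ZMod 2)
    (hc : ∀ σ ∈ c.support, (x ∈ σ ∧ w ∈ σ) ∧ σ.card = p + 1) :
    pushChain (fun v => if v = x then w else v) p c = 0 := by
  refine supported_induction (S := {σ : Finset V | (x ∈ σ ∧ w ∈ σ) ∧ σ.card = p + 1})
    (M := fun c => pushChain (fun v => if v = x then w else v) p c = 0) ?_ ?_ ?_ c hc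
  · exact pushChain_zero _ _
  · intro a b ha hb
    show pushChain _ _ (a + b) = 0
    rw [pushChain_add, ha, hb, add_zero]
  · rintro σ ⟨⟨hx, hwσ⟩, hcard⟩
    show pushChain _ _ (Finsupp.single σ (1 : ZMod 2)) = 0
    rw [pushChain_single, image_update hx,
      Finset.insert_eq_self.mpr (Finset.mem_erase.mpr ⟨Ne.symm hxw, hwσ⟩),
      Finset.card_erase_of_mem hx, hcard]
    rw [if_neg (by omega)]

end AlgebraAux2
section GlueStep

variable {V : Type*} [DecidableEq V]

lemma glue_step (x w : V) (p : ℕ) (z : Finset V →₀ ZMod 2) (hz : bdry V z = 0)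
    (hcard : ∀ σ ∈ z.support, σ.card = p + 1) :
    z + pushChain (fun v => if v = x then w else v) p z
      = bdry V (coneChain w (Finsupp.filter (fun σ => x ∈ σ ∧ w ∉ σ) z)) := by
  by_cases hxw : x = w
  · subst hxw
    have hid : pushChain (fun v => if v = x then x else v) p z = z := by
      have : ∀ σ ∈ z.support, x ∉ σ ∨ True := fun _ _ => Or.inr trivial
      refine supported_induction (S := {σ : Finset V | σ.card = p + 1})
        (M := fun c => pushChain (fun v => if v = x then x else v) p c = c)
        (pushChain_zero _ _) ?_ ?_ z hcard
      · intro a b ha hb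
        show pushChain _ _ (a + b) = a + b
        rw [pushChain_add, ha, hb]
      · intro σ hσ
        show pushChain _ _ (Finsupp.single σ (1 : ZMod 2)) = Finsupp.single σ (1 : ZMod 2)
        have himg : σ.image (fun v => if v = x then x else v) = σ := by
          have heq : Set.EqOn (fun v => if v = x then x else v) id ↑σ := by
            intro v _
            by_cases h : v = x <;> simp [h]
          rw [Finset.image_congr heq, Finset.image_id]
        have hσ' : σ.card = p + 1 := hσ
        rw [pushChain_single, himg, if_pos hσ']
    rw [hid, chain_add_self]
    have hf0 : Finsupp.filter (fun σ => x ∈ σ ∧ x ∉ σ) z = 0 :=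
      (Finsupp.filter_eq_zero_iff _ _).mpr (fun τ h => absurd h.1 h.2)
    rw [hf0]
    unfold coneChain
    rw [Finsupp.mapDomain_zero, map_zero]
  · set f : V → V := fun v => if v = x then w else v with hf
    set s0 := Finsupp.filter (fun σ => x ∈ σ ∧ w ∉ σ) z with hs0
    set s1 := Finsupp.filter (fun σ => x ∈ σ ∧ w ∈ σ) z with hs1
    set r := Finsupp.filter (fun σ => x ∉ σ) z with hr
    have hdec : z = s0 + s1 + r := by
      rw [hs0, hs1, hr]
      refine supported_induction (S := Set.univ)
        (M := fun c => c = Finsupp.filter (fun σ => x ∈ σ ∧ w ∉ σ) c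
          + Finsupp.filter (fun σ => x ∈ σ ∧ w ∈ σ) c
          + Finsupp.filter (fun σ => x ∉ σ) c) ?_ ?_ ?_ z (by simp)
      · show (0 : Finset V →₀ ZMod 2) = _
        simp [Finsupp.filter_zero]
      · intro a b ha hb
        show a + b = _
        rw [Finsupp.filter_add, Finsupp.filter_add, Finsupp.filter_add]
        conv_lhs => rw [ha, hb]
        abel
      · intro σ _
        show Finsupp.single σ (1 : ZMod 2) = _
        by_cases hxσ : x ∈ σ
        · by_cases hwσ : w ∈ σ
          · rw [Finsupp.filter_single_of_neg (fun σ => x ∈ σ ∧ w ∉ σ)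
                (fun h => h.2 hwσ),
              Finsupp.filter_single_of_pos (fun σ => x ∈ σ ∧ w ∈ σ) ⟨hxσ, hwσ⟩,
              Finsupp.filter_single_of_neg (fun σ => x ∉ σ) (fun h => h hxσ),
              zero_add, add_zero]
          · rw [Finsupp.filter_single_of_pos (fun σ => x ∈ σ ∧ w ∉ σ) ⟨hxσ, hwσ⟩,
              Finsupp.filter_single_of_neg (fun σ => x ∈ σ ∧ w ∈ σ)
                (fun h => hwσ h.2),
              Finsupp.filter_single_of_neg (fun σ => x ∉ σ) (fun h => h hxσ),
              add_zero, add_zero]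
        · rw [Finsupp.filter_single_of_neg (fun σ => x ∈ σ ∧ w ∉ σ)
              (fun h => hxσ h.1),
            Finsupp.filter_single_of_neg (fun σ => x ∈ σ ∧ w ∈ σ)
              (fun h => hxσ h.1),
            Finsupp.filter_single_of_pos (fun σ => x ∉ σ) hxσ, zero_add, zero_add]
    have hs0sup : ∀ σ ∈ s0.support, x ∈ σ ∧ w ∉ σ ∧ σ.card = p + 1 := by
      intro σ hσ
      rw [hs0, Finsupp.support_filter, Finset.mem_filter] at hσ
      exact ⟨hσ.2.1, hσ.2.2, hcard σ hσ.1⟩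
    have hs1sup : ∀ σ ∈ s1.support, (x ∈ σ ∧ w ∈ σ) ∧ σ.card = p + 1 := by
      intro σ hσ
      rw [hs1, Finsupp.support_filter, Finset.mem_filter] at hσ
      exact ⟨hσ.2, hcard σ hσ.1⟩
    have hrsup : ∀ σ ∈ r.support, x ∉ σ ∧ σ.card = p + 1 := by
      intro σ hσ
      rw [hr, Finsupp.support_filter, Finset.mem_filter] at hσ
      exact ⟨hσ.2, hcard σ hσ.1⟩
    have hps1 : pushChain f p s1 = 0 := pushChain_degen x w hxw p s1 hs1sup
    have hpr : pushChain f p r = r := pushChain_id_of x w p r hrsup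
    have hpz : pushChain f p z = pushChain f p s0 + r := by
      conv_lhs => rw [hdec]
      rw [pushChain_add, pushChain_add, hps1, hpr, add_zero]
    have hbdryz : bdry V s0 + bdry V s1 + bdry V r = 0 := by
      rw [← map_add, ← map_add, ← hdec, hz]
    have hFs1 : Finsupp.filter (fun τ => x ∈ τ ∧ w ∉ τ) (bdry V s1)
        = Finsupp.mapDomain (fun σ => σ.erase w) s1 :=
      filter_bdry_of_both x w hxw s1 (fun σ hσ => (hs1sup σ hσ).1)
    have hFr : Finsupp.filter (fun τ => x ∈ τ ∧ w ∉ τ) (bdry V r) = 0 :=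
      filter_bdry_eq_zero x (fun τ => x ∈ τ ∧ w ∉ τ) (fun τ h => h.1) r (fun σ hσ => (hrsup σ hσ).1)
    have hFs0 : Finsupp.filter (fun τ => x ∈ τ ∧ w ∉ τ) (bdry V s0)
        = Finsupp.mapDomain (fun σ => σ.erase w) s1 := by
      have h1 : Finsupp.filter (fun τ => x ∈ τ ∧ w ∉ τ) (bdry V s0)
          + Finsupp.mapDomain (fun σ => σ.erase w) s1 = 0 := by
        have := congrArg (Finsupp.filter (fun τ => x ∈ τ ∧ w ∉ τ)) hbdryz
        rw [Finsupp.filter_add, Finsupp.filter_add, Finsupp.filter_zero, hFs1, hFr,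
          add_zero] at this
        exact this
      calc Finsupp.filter (fun τ => x ∈ τ ∧ w ∉ τ) (bdry V s0)
          = Finsupp.filter (fun τ => x ∈ τ ∧ w ∉ τ) (bdry V s0)
            + (Finsupp.mapDomain (fun σ => σ.erase w) s1
               + Finsupp.mapDomain (fun σ => σ.erase w) s1) := by
            rw [chain_add_self, add_zero]
        _ = (Finsupp.filter (fun τ => x ∈ τ ∧ w ∉ τ) (bdry V s0)
              + Finsupp.mapDomain (fun σ => σ.erase w) s1)
            + Finsupp.mapDomain (fun σ => σ.erase w) s1 := by rw [add_assoc]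
        _ = Finsupp.mapDomain (fun σ => σ.erase w) s1 := by rw [h1, zero_add]
    have hcone : coneChain w (Finsupp.mapDomain (fun σ => σ.erase w) s1) = s1 :=
      cone_mapErase w s1 (fun σ hσ => (hs1sup σ hσ).1.2)
    have hbc : bdry V (coneChain w s0) = s0 + pushChain f p s0 + s1 := by
      rw [bdry_cone x w p s0 hs0sup, hFs0, hcone]
    rw [hbc, hpz]
    conv_lhs => rw [hdec]
    rw [show s0 + s1 + r + (pushChain f p s0 + r)
        = s0 + pushChain f p s0 + s1 + (r + r) from by abel, chain_add_self, add_zero]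

end GlueStep
section RankAux

variable {V : Type*} [DecidableEq V]

lemma rank_supported_eq (T : Finset (Finset V)) :
    Module.rank (ZMod 2) ↥(Finsupp.supported (ZMod 2) (ZMod 2) (↑T : Set (Finset V)))
      = (T.card : Cardinal) := by
  rw [(Finsupp.supportedEquivFinsupp (M := ZMod 2) (R := ZMod 2)
      (↑T : Set (Finset V))).rank_eq,
    rank_finsupp_self]
  have : Cardinal.mk ↥(↑T : Set (Finset V)) = (T.card : Cardinal) := by
    simpa using Cardinal.mk_coe_finset (s := T)
  rw [this, Cardinal.lift_natCast]

lemma pBetti_le_of_push (K L : Set (Finset V)) (p : ℕ) (T : Finset (Finset V))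
    (h : ∀ z ∈ cyclesIn K p, ∃ z' : Finset V →₀ ZMod 2,
      (↑z'.support ⊆ (↑T : Set (Finset V))) ∧ z - z' ∈ bdriesIn L p) :
    pBetti K L p ≤ (T.card : Cardinal) := by
  have hle : Submodule.map (bdriesIn L p).mkQ (cyclesIn K p)
      ≤ Submodule.map (bdriesIn L p).mkQ
          (Finsupp.supported (ZMod 2) (ZMod 2) (↑T : Set (Finset V))) := by
    rintro y ⟨z, hz, rfl⟩
    obtain ⟨z', hsup, hb⟩ := h z hz
    refine ⟨z', (Finsupp.mem_supported _ _).mpr hsup, ?_⟩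
    rw [Submodule.mkQ_apply, Submodule.mkQ_apply]
    exact ((Submodule.Quotient.eq _).mpr hb).symm
  calc pBetti K L p
      ≤ Module.rank (ZMod 2) ↥(Submodule.map (bdriesIn L p).mkQ
          (Finsupp.supported (ZMod 2) (ZMod 2) (↑T : Set (Finset V)))) :=
        Submodule.rank_mono hle
    _ ≤ Module.rank (ZMod 2)
          ↥(Finsupp.supported (ZMod 2) (ZMod 2) (↑T : Set (Finset V))) :=
        rank_map_le _ _
    _ = (T.card : Cardinal) := rank_supported_eq T

lemma pBetti_le_card (K L : Set (Finset V)) (p : ℕ) (T : Finset (Finset V))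
    (hT : ∀ σ, σ ∈ K → σ.card = p + 1 → σ ∈ T) : pBetti K L p ≤ (T.card : Cardinal) := by
  refine pBetti_le_of_push K L p T (fun z hz => ⟨z, ?_, by rw [sub_self]; exact zero_mem _⟩)
  have h1 : ↑z.support ⊆ {σ : Finset V | σ ∈ K ∧ σ.card = p + 1} :=
    (Finsupp.mem_supported _ _).mp hz.1
  exact fun σ hσ => Finset.mem_coe.mpr (hT σ (h1 hσ).1 (h1 hσ).2)

end RankAux
section Geometry

noncomputable def cellIdx (d : ℕ) (s : ℝ) (x : EuclideanSpace ℝ (Fin d)) : Fin d → ℤ :=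
  fun i => ⌊x i / s⌋

noncomputable def rep (d : ℕ) (s : ℝ) (A : Finset (EuclideanSpace ℝ (Fin d)))
    (k : Fin d → ℤ) : EuclideanSpace ℝ (Fin d) :=
  if h : ∃ b ∈ A, cellIdx d s b = k then h.choose else 0

noncomputable def snap (d : ℕ) (s : ℝ) (A : Finset (EuclideanSpace ℝ (Fin d)))
    (a : EuclideanSpace ℝ (Fin d)) : EuclideanSpace ℝ (Fin d) :=
  rep d s A (cellIdx d s a)

lemma rep_spec {d : ℕ} {s : ℝ} {A : Finset (EuclideanSpace ℝ (Fin d))} {k : Fin d → ℤ}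
    (h : ∃ b ∈ A, cellIdx d s b = k) :
    rep d s A k ∈ A ∧ cellIdx d s (rep d s A k) = k := by
  rw [rep, dif_pos h]
  exact ⟨h.choose_spec.1, h.choose_spec.2⟩

lemma snap_mem {d : ℕ} {s : ℝ} {A : Finset (EuclideanSpace ℝ (Fin d))}
    {a : EuclideanSpace ℝ (Fin d)} (ha : a ∈ A) : snap d s A a ∈ A :=
  (rep_spec ⟨a, ha, rfl⟩).1

lemma cellIdx_snap {d : ℕ} {s : ℝ} {A : Finset (EuclideanSpace ℝ (Fin d))}
    {a : EuclideanSpace ℝ (Fin d)} (ha : a ∈ A) :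
    cellIdx d s (snap d s A a) = cellIdx d s a :=
  (rep_spec ⟨a, ha, rfl⟩).2

lemma snap_snap {d : ℕ} {s : ℝ} {A : Finset (EuclideanSpace ℝ (Fin d))}
    {a : EuclideanSpace ℝ (Fin d)} (ha : a ∈ A) :
    snap d s A (snap d s A a) = snap d s A a := by
  have h := cellIdx_snap (s := s) ha
  unfold snap at h ⊢
  rw [h]

lemma coord_dist_le {d : ℕ} (x y : EuclideanSpace ℝ (Fin d)) (i : Fin d) :
    dist (x i) (y i) ≤ dist x y := by
  rw [EuclideanSpace.dist_eq]
  have h1 : dist (x i) (y i) ^ 2 ≤ ∑ j, dist (x j) (y j) ^ 2 :=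
    Finset.single_le_sum (f := fun j => dist (x j) (y j) ^ 2)
      (fun j _ => sq_nonneg _) (Finset.mem_univ i)
  calc dist (x i) (y i) = Real.sqrt (dist (x i) (y i) ^ 2) :=
        (Real.sqrt_sq dist_nonneg).symm
    _ ≤ _ := Real.sqrt_le_sqrt h1

lemma dist_le_of_cellIdx_eq {d : ℕ} {s : ℝ} (hs : 0 < s) {x y : EuclideanSpace ℝ (Fin d)}
    (h : cellIdx d s x = cellIdx d s y) : dist x y ≤ s * Real.sqrt d := by
  rw [EuclideanSpace.dist_eq]
  have hcoord : ∀ i, dist (x i) (y i) ≤ s := by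
    intro i
    have hfl : ⌊x i / s⌋ = ⌊y i / s⌋ := congrFun h i
    have h2 : |x i / s - y i / s| < 1 := Int.abs_sub_lt_one_of_floor_eq_floor hfl
    rw [div_sub_div_same, abs_div, abs_of_pos hs, div_lt_one hs] at h2
    rw [Real.dist_eq]
    exact h2.le
  calc Real.sqrt (∑ i, dist (x i) (y i) ^ 2)
      ≤ Real.sqrt (∑ _i : Fin d, s ^ 2) := by
        apply Real.sqrt_le_sqrt
        exact Finset.sum_le_sum fun i _ =>
          pow_le_pow_left₀ dist_nonneg (hcoord i) 2
    _ = Real.sqrt ((d : ℝ) * s ^ 2) := by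
        rw [Finset.sum_const, Finset.card_univ, Fintype.card_fin, nsmul_eq_mul]
    _ = s * Real.sqrt d := by
        rw [Real.sqrt_mul (Nat.cast_nonneg d), Real.sqrt_sq hs.le, mul_comm]

lemma mem_Icc_floor {s : ℝ} (hs : 0 < s) {a b : ℝ} (h : |b - a| ≤ 2) :
    ⌊b / s⌋ ∈ Finset.Icc ⌊(a - 2) / s⌋ ⌊(a + 2) / s⌋ := by
  rw [abs_sub_le_iff] at h
  rw [Finset.mem_Icc]
  constructor
  · exact Int.floor_mono (by gcongr; linarith [h.2])
  · exact Int.floor_mono (by gcongr; linarith [h.1])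

lemma card_Icc_floor_le {s : ℝ} (hs : 0 < s) (c : ℝ) :
    ((Finset.Icc ⌊(c - 2) / s⌋ ⌊(c + 2) / s⌋).card : ℝ) ≤ 4 / s + 2 := by
  rw [Int.card_Icc]
  rcases le_or_gt (⌊(c + 2) / s⌋ + 1 - ⌊(c - 2) / s⌋ : ℤ) 0 with h | h
  · rw [Int.toNat_of_nonpos h]
    have : (0 : ℝ) ≤ 4 / s + 2 := by positivity
    simpa using this
  · have hcast : (((⌊(c + 2) / s⌋ + 1 - ⌊(c - 2) / s⌋ : ℤ).toNat : ℕ) : ℝ)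
        = ((⌊(c + 2) / s⌋ : ℝ) + 1 - (⌊(c - 2) / s⌋ : ℝ)) := by
      rw [← Int.cast_natCast, Int.toNat_of_nonneg h.le]
      push_cast
      ring
    rw [hcast]
    have h1 : (⌊(c + 2) / s⌋ : ℝ) ≤ (c + 2) / s := Int.floor_le _
    have h2 : (c - 2) / s - 1 < (⌊(c - 2) / s⌋ : ℝ) := Int.sub_one_lt_floor _
    have h3 : (c + 2) / s - (c - 2) / s = 4 / s := by
      field_simp
      ring
    linarith

end Geometry
section Iterate

lemma snap_iterate (d : ℕ) (ε : ℝ) (hε : 0 < ε) (A : Finset (EuclideanSpace ℝ (Fin d)))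
    (q : EuclideanSpace ℝ (Fin d) → EuclideanSpace ℝ (Fin d))
    (hqA : ∀ a ∈ A, q a ∈ A) (hqd : ∀ a ∈ A, dist a (q a) ≤ ε)
    (hqi : ∀ a ∈ A, q (q a) = q a) (p : ℕ) :
    ∀ (l : List (EuclideanSpace ℝ (Fin d)))
      (z : Finset (EuclideanSpace ℝ (Fin d)) →₀ ZMod 2),
      bdry _ z = 0 →
      (∀ σ ∈ z.support, σ.card = p + 1
        ∧ ↑σ ⊆ (↑A : Set (EuclideanSpace ℝ (Fin d))) ∧ ∃ c, ∀ v ∈ σ,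
          (∃ a ∈ A, q a = v ∧ dist a c ≤ 1) ∨ (v ∈ l ∧ dist v c ≤ 1)) →
      ∃ z', (z - z' ∈ bdriesIn (cech d (1 + ε) A) p) ∧
        (∀ σ ∈ z'.support, σ.card = p + 1
          ∧ ↑σ ⊆ (↑A : Set (EuclideanSpace ℝ (Fin d))) ∧ ∃ c, ∀ v ∈ σ,
            ∃ a ∈ A, q a = v ∧ dist a c ≤ 1) := by
  intro l
  induction l with
  | nil =>
    intro z hz hsupp
    refine ⟨z, by rw [sub_self]; exact zero_mem _, fun σ hσ => ?_⟩
    obtain ⟨h1, h2, c, h3⟩ := hsupp σ hσ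
    exact ⟨h1, h2, c, fun v hv =>
      (h3 v hv).resolve_right (fun hr => List.not_mem_nil hr.1)⟩
  | cons a l ih =>
    intro z hz hsupp
    have hcards : ∀ σ ∈ z.support, σ.card = p + 1 := fun σ h => (hsupp σ h).1
    have hglue := glue_step a (q a) p z hz hcards
    have hcone_mem : coneChain (q a) (Finsupp.filter (fun σ => a ∈ σ ∧ q a ∉ σ) z)
        ∈ chainsIn (cech d (1 + ε) A) (p + 1) := by
      rw [chainsIn, Finsupp.mem_supported]
      intro τ hτ
      obtain ⟨σ, hσ, rfl⟩ := Finset.mem_image.mp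
        (Finsupp.mapDomain_support (Finset.mem_coe.mp hτ))
      rw [Finsupp.support_filter, Finset.mem_filter] at hσ
      obtain ⟨hσz, haσ, hqaσ⟩ := hσ
      obtain ⟨hcard, hsub, c, hc⟩ := hsupp σ hσz
      have haA : a ∈ A := Finset.mem_coe.mp (hsub (Finset.mem_coe.mpr haσ))
      have hdista : dist a c ≤ 1 + ε := by
        rcases hc a haσ with ⟨a', hA, hq, hd⟩ | ⟨_, hd⟩
        · calc dist a c = dist (q a') c := by rw [hq]
            _ ≤ dist (q a') a' + dist a' c := dist_triangle _ _ _
            _ ≤ ε + 1 := add_le_add (by rw [dist_comm]; exact hqd a' hA) hd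
            _ = 1 + ε := add_comm _ _
        · linarith
      have hvert : ∀ b ∈ insert (q a) σ, dist b c ≤ 1 + ε := by
        intro b hb
        rcases Finset.mem_insert.mp hb with rfl | hbσ
        · rcases hc a haσ with ⟨a', hA, hq, hd⟩ | ⟨_, hd⟩
          · have hqa : q a = a := by
              conv_lhs => rw [← hq, hqi a' hA, hq]
            rw [hqa]
            exact hdista
          · calc dist (q a) c ≤ dist (q a) a + dist a c := dist_triangle _ _ _
              _ ≤ ε + 1 := add_le_add (by rw [dist_comm]; exact hqd a haA) hd
              _ = 1 + ε := add_comm _ _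
        · rcases hc b hbσ with ⟨a', hA, hq, hd⟩ | ⟨_, hd⟩
          · calc dist b c = dist (q a') c := by rw [hq]
              _ ≤ dist (q a') a' + dist a' c := dist_triangle _ _ _
              _ ≤ ε + 1 := add_le_add (by rw [dist_comm]; exact hqd a' hA) hd
              _ = 1 + ε := add_comm _ _
          · linarith
      constructor
      · refine ⟨Finset.insert_nonempty _ _, ?_, c, hvert⟩
        intro v hv
        rcases Finset.mem_insert.mp (Finset.mem_coe.mp hv) with rfl | hvσ
        · exact Finset.mem_coe.mpr (hqA a haA)
        · exact hsub (Finset.mem_coe.mpr hvσ)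
      · rw [Finset.card_insert_of_notMem hqaσ, hcard]
    have hdiff : z - pushChain (fun v => if v = a then q a else v) p z
        ∈ bdriesIn (cech d (1 + ε) A) p := by
      rw [chain_sub, hglue]
      exact Submodule.mem_map_of_mem hcone_mem
    have hz1cyc : bdry _ (pushChain (fun v => if v = a then q a else v) p z) = 0 := by
      have h2 : pushChain (fun v => if v = a then q a else v) p z
          = z + (z + pushChain (fun v => if v = a then q a else v) p z) := by
        rw [← add_assoc, chain_add_self, zero_add]
      rw [h2, hglue, map_add, hz, bdry_bdry, add_zero]
    have hinv1 : ∀ σ ∈ (pushChain (fun v => if v = a then q a else v) p z).support,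
        σ.card = p + 1 ∧ ↑σ ⊆ (↑A : Set (EuclideanSpace ℝ (Fin d))) ∧ ∃ c, ∀ v ∈ σ,
          (∃ a' ∈ A, q a' = v ∧ dist a' c ≤ 1) ∨ (v ∈ l ∧ dist v c ≤ 1) := by
      intro τ hτ
      rw [pushChain, Finsupp.support_filter, Finset.mem_filter] at hτ
      obtain ⟨hτm, hτcard⟩ := hτ
      obtain ⟨σ, hσ, rfl⟩ := Finset.mem_image.mp (Finsupp.mapDomain_support hτm)
      obtain ⟨hcard, hsub, c, hc⟩ := hsupp σ hσ
      refine ⟨hτcard, ?_, c, ?_⟩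
      · intro v hv
        obtain ⟨u, hu, rfl⟩ := Finset.mem_image.mp (Finset.mem_coe.mp hv)
        by_cases h : u = a
        · rw [if_pos h]
          exact Finset.mem_coe.mpr
            (hqA a (Finset.mem_coe.mp (hsub (Finset.mem_coe.mpr (h ▸ hu)))))
        · rw [if_neg h]
          exact hsub (Finset.mem_coe.mpr hu)
      · intro v hv
        obtain ⟨u, hu, rfl⟩ := Finset.mem_image.mp hv
        rcases hc u hu with ⟨a', hA, hq, hd⟩ | ⟨hul, hd⟩
        · by_cases h : u = a
          · have h2 : q a = q a' := by rw [← h, ← hq, hqi a' hA]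
            rw [if_pos h]
            exact Or.inl ⟨a', hA, h2.symm, hd⟩
          · rw [if_neg h]
            exact Or.inl ⟨a', hA, hq, hd⟩
        · by_cases h : u = a
          · rw [if_pos h]
            exact Or.inl ⟨a, Finset.mem_coe.mp (hsub (Finset.mem_coe.mpr (h ▸ hu))),
              rfl, h ▸ hd⟩
          · rw [if_neg h]
            refine Or.inr ⟨?_, hd⟩
            rcases List.mem_cons.mp hul with h' | h'
            · exact absurd h' h
            · exact h'
    obtain ⟨z', hz'd, hz'inv⟩ :=
      ih (pushChain (fun v => if v = a then q a else v) p z) hz1cyc hinv1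
    refine ⟨z', ?_, hz'inv⟩
    have := add_mem hdiff hz'd
    rwa [sub_add_sub_cancel] at this

end Iterate
/-- the linear upper bound on persistent Betti numbers of Čech complexes, with
`c = binom(C, p)` for `C = (3 + 4√d/ε)^d`. -/
theorem pBetti_cech_le_linear (d : ℕ) (ε : ℝ) (hε : 0 < ε) (p : ℕ)
    (A : Finset (EuclideanSpace ℝ (Fin d))) :
    pBetti (cech d 1 A) (cech d (1 + ε) A) p ≤
      (((Nat.ceil ((3 + 4 * Real.sqrt d / ε) ^ d)).choose p * A.card : ℕ) : Cardinal) := by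
  rcases Nat.eq_zero_or_pos d with hd | hd
  · subst hd
    have hsub : ∀ σ : Finset (EuclideanSpace ℝ (Fin 0)), σ.card ≤ 1 := by
      intro σ
      refine Finset.card_le_one.mpr (fun a ha b hb => ?_)
      exact PiLp.ext (fun i => Fin.elim0 i)
    rcases Nat.eq_zero_or_pos p with hp | hp
    · subst hp
      refine le_trans (pBetti_le_card _ _ _ (A.image (fun a => {a})) ?_) ?_
      · intro σ hσ hcard
        obtain ⟨a, rfl⟩ := Finset.card_eq_one.mp hcard
        refine Finset.mem_image_of_mem _ ?_
        have h2 := hσ.2.1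
        exact Finset.mem_coe.mp (h2 (by simp))
      · rw [Nat.choose_zero_right, one_mul]
        exact_mod_cast Nat.cast_le.mpr Finset.card_image_le
    · refine le_trans (pBetti_le_card _ _ _ ∅ ?_) ?_
      · intro σ _ hcard
        exfalso
        have := hsub σ
        omega
      · simp
  · set s : ℝ := ε / Real.sqrt d with hsdef
    have hsd : (0 : ℝ) < Real.sqrt d := Real.sqrt_pos.mpr (by exact_mod_cast hd)
    have hs : 0 < s := div_pos hε hsd
    set q := snap d s A with hqdef
    have hqA : ∀ a ∈ A, q a ∈ A := fun a ha => snap_mem ha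
    have hqd : ∀ a ∈ A, dist a (q a) ≤ ε := by
      intro a ha
      have h1 := dist_le_of_cellIdx_eq hs (x := a) (y := q a) (cellIdx_snap ha).symm
      rwa [hsdef, div_mul_cancel₀ _ (ne_of_gt hsd)] at h1
    have hqi : ∀ a ∈ A, q (q a) = q a := fun a ha => snap_snap ha
    set C := Nat.ceil ((3 + 4 * Real.sqrt d / ε) ^ d) with hC
    set Ra : EuclideanSpace ℝ (Fin d) → Finset (EuclideanSpace ℝ (Fin d)) := fun a =>
      (Fintype.piFinset fun i => Finset.Icc ⌊(a i - 2) / s⌋ ⌊(a i + 2) / s⌋).image (rep d s A)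
      with hRa
    set T : Finset (Finset (EuclideanSpace ℝ (Fin d))) :=
      A.biUnion (fun a => (((Ra a).erase (q a)).powersetCard p).image (insert (q a))) with hT
    have hRaC : ∀ a : EuclideanSpace ℝ (Fin d), (Ra a).card ≤ C := by
      intro a
      have h1 : (Ra a).card ≤ ∏ i, (Finset.Icc ⌊(a i - 2) / s⌋ ⌊(a i + 2) / s⌋).card := by
        rw [← Fintype.card_piFinset]
        exact Finset.card_image_le
      refine le_trans h1 ?_
      have hfac : 4 / s = 4 * Real.sqrt d / ε := by
        rw [hsdef, div_div_eq_mul_div]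
      have hreal : ((∏ i, (Finset.Icc ⌊(a i - 2) / s⌋ ⌊(a i + 2) / s⌋).card : ℕ) : ℝ)
          ≤ (3 + 4 * Real.sqrt d / ε) ^ d := by
        push_cast
        calc ∏ i, ((Finset.Icc ⌊(a i - 2) / s⌋ ⌊(a i + 2) / s⌋).card : ℝ)
            ≤ ∏ _i : Fin d, (3 + 4 * Real.sqrt d / ε) :=
              Finset.prod_le_prod (fun i _ => Nat.cast_nonneg _)
                (fun i _ => le_trans (card_Icc_floor_le hs _) (by rw [hfac]; linarith))
          _ = (3 + 4 * Real.sqrt d / ε) ^ d := by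
              rw [Finset.prod_const, Finset.card_univ, Fintype.card_fin]
      have h2 : ((∏ i, (Finset.Icc ⌊(a i - 2) / s⌋ ⌊(a i + 2) / s⌋).card : ℕ) : ℝ)
          ≤ (C : ℝ) := le_trans hreal (Nat.le_ceil _)
      exact_mod_cast h2
    have hTcard : T.card ≤ C.choose p * A.card := by
      have hper : ∀ a ∈ A,
          ((((Ra a).erase (q a)).powersetCard p).image (insert (q a))).card ≤ C.choose p := by
        intro a _
        calc ((((Ra a).erase (q a)).powersetCard p).image (insert (q a))).card
            ≤ (((Ra a).erase (q a)).powersetCard p).card := Finset.card_image_le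
          _ = (((Ra a).erase (q a)).card).choose p := Finset.card_powersetCard _ _
          _ ≤ C.choose p := Nat.choose_le_choose p
              (le_trans (Finset.card_le_card (Finset.erase_subset _ _)) (hRaC a))
      calc T.card ≤ ∑ a ∈ A, ((((Ra a).erase (q a)).powersetCard p).image (insert (q a))).card :=
            Finset.card_biUnion_le
        _ ≤ ∑ _a ∈ A, C.choose p := Finset.sum_le_sum hper
        _ = A.card * C.choose p := by rw [Finset.sum_const, smul_eq_mul]
        _ = C.choose p * A.card := mul_comm _ _
    refine le_trans (pBetti_le_of_push _ _ p T ?_) ?_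
    · intro z hz
      have hzc : bdry _ z = 0 := LinearMap.mem_ker.mp hz.2
      have hzsup := (Finsupp.mem_supported _ _).mp hz.1
      have hinit : ∀ σ ∈ z.support, σ.card = p + 1
          ∧ ↑σ ⊆ (↑A : Set (EuclideanSpace ℝ (Fin d))) ∧ ∃ c, ∀ v ∈ σ,
            (∃ a ∈ A, q a = v ∧ dist a c ≤ 1) ∨ (v ∈ A.toList ∧ dist v c ≤ 1) := by
        intro σ hσ
        obtain ⟨hσK, hcard⟩ := hzsup (Finset.mem_coe.mpr hσ)
        obtain ⟨hne, hsubA, c, hc⟩ := hσK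
        exact ⟨hcard, hsubA, c, fun v hv => Or.inr
          ⟨Finset.mem_toList.mpr (Finset.mem_coe.mp (hsubA (Finset.mem_coe.mpr hv))),
            hc v hv⟩⟩
      obtain ⟨z', hd', hinv⟩ := snap_iterate d ε hε A q hqA hqd hqi p A.toList z hzc hinit
      refine ⟨z', ?_, hd'⟩
      intro τ hτ
      obtain ⟨hcard, hsubA, c, hc⟩ := hinv τ (Finset.mem_coe.mp hτ)
      have hne : τ.Nonempty := Finset.card_pos.mp (by omega)
      obtain ⟨v0, hv0⟩ := hne
      obtain ⟨a, haA, hqa, had⟩ := hc v0 hv0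
      refine Finset.mem_coe.mpr (Finset.mem_biUnion.mpr
        ⟨a, haA, Finset.mem_image.mpr ⟨τ.erase (q a), ?_, Finset.insert_erase (hqa ▸ hv0)⟩⟩)
      rw [Finset.mem_powersetCard]
      constructor
      · intro w hw
        have hwτ : w ∈ τ := Finset.mem_of_mem_erase hw
        obtain ⟨b, hbA, hqb, hbd⟩ := hc w hwτ
        refine Finset.mem_erase.mpr ⟨(Finset.mem_erase.mp hw).1, ?_⟩
        refine Finset.mem_image.mpr ⟨cellIdx d s b, ?_, hqb⟩
        rw [Fintype.mem_piFinset]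
        intro i
        refine mem_Icc_floor hs ?_
        have hba : dist b a ≤ 2 := by
          calc dist b a ≤ dist b c + dist c a := dist_triangle _ _ _
            _ ≤ 1 + 1 := add_le_add hbd (by rw [dist_comm]; exact had)
            _ = 2 := by norm_num
        calc |b i - a i| = dist (b i) (a i) := (Real.dist_eq _ _).symm
          _ ≤ dist b a := coord_dist_le b a i
          _ ≤ 2 := hba
      · rw [Finset.card_erase_of_mem (hqa ▸ hv0), hcard]
        omega
    · exact_mod_cast Nat.cast_le.mpr hTcard
end
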